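/- arXiv:2407.21025 — 2 statements merged into one kernel-verified Lean document; each statement's English description precedes it below -/
import Mathlib

section
/- Let S and A be finite nonempty sets, f : S × A → ℝ, λ(s'|s,a) ≥ 0 for s' ≠ s with total rate Λ(s,a) := ∑_{s'≠s} λ(s'|s,a), and γ > 0. Let V₀ : S → ℝ be the unique solution of the continuous-time optimality equation, and for each Δ > 0 with Δ·Λ(s,a) ≤ 1 for all (s,a), let V_Δ : S → ℝ be the unique solution of the discrete-time Bellman equation with increment Δ. Then ‖V_Δ − V₀‖ → 0 as Δ → 0⁺, where ‖V‖ := max_{s∈S} |V(s)|. -/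
/-!
When `Δ·Λ ≤ 1`, the kernel `p_Δ` is stochastic, so the discrete Bellman operator `T_Δ` is an
`e^{-γΔ}`-contraction for the sup norm. Writing the continuous-time equation as
`V₀(s) = max_a ((1 - γΔ) V₀(s) + Δ (f(s,a) + (Q_a V₀)(s)))`, the action-wise difference between
`T_Δ V₀` and `V₀` is `(e^{-γΔ} - 1 + γΔ) V₀(s) - (1 - e^{-γΔ}) Δ (Q_a V₀)(s)`, and since
`e^{-x} - 1 + x ≤ x (1 - e^{-x})` this is at most `(1 - e^{-γΔ}) Δ (H + γ‖V₀‖)`, where `H` bounds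
`|Q_a V₀|`. The contraction estimate `‖V_Δ - V₀‖ ≤ ‖T_Δ V₀ - V₀‖ / (1 - e^{-γΔ})` then gives
`‖V_Δ - V₀‖ ≤ Δ (H + γ‖V₀‖)`, and every small enough `Δ` is admissible.
-/

open Finset Filter Topology Real

section SupDiff

variable {ι α : Type*} [AddCommGroup α] [LinearOrder α] [IsOrderedAddMonoid α]
  {s : Finset ι} {F G : ι → α} {c : α}

theorem Finset.sup'_sub_sup'_le (hs : s.Nonempty) (h : ∀ i ∈ s, F i - G i ≤ c) :
    s.sup' hs F - s.sup' hs G ≤ c :=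
  sub_le_iff_le_add'.2 <| sup'_le _ _ fun i hi =>
    (sub_le_iff_le_add'.1 (h i hi)).trans (add_le_add_left (le_sup' G hi) c)

theorem Finset.abs_sup'_sub_sup'_le (hs : s.Nonempty) (h : ∀ i ∈ s, |F i - G i| ≤ c) :
    |s.sup' hs F - s.sup' hs G| ≤ c :=
  abs_sub_le_iff.2
    ⟨sup'_sub_sup'_le hs fun i hi => (abs_sub_le_iff.1 (h i hi)).1,
      sup'_sub_sup'_le hs fun i hi => (abs_sub_le_iff.1 (h i hi)).2⟩

end SupDiff

theorem Real.exp_neg_mul_one_add_le_one (x : ℝ) : exp (-x) * (1 + x) ≤ 1 :=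
  calc exp (-x) * (1 + x) ≤ exp (-x) * exp x := by
        gcongr; linarith [add_one_le_exp x]
    _ = 1 := by rw [← exp_add, neg_add_cancel, exp_zero]

section Discretization

variable {S A : Type*} [Fintype S] [DecidableEq S]
  (f : S → A → ℝ) (lam : S → S → A → ℝ) (γ Δ : ℝ)

def totalRate (s : S) (a : A) : ℝ := ∑ s' ∈ univ.erase s, lam s' s a

/-- `(Q_a V)(s)`, where `Q_a` is the generator of the chain under the action `a`. -/
def generatorApply (V : S → ℝ) (s : S) (a : A) : ℝ :=
  ∑ s' ∈ univ.erase s, lam s' s a * V s' - totalRate lam s a * V s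

/-- `∑ s', p_Δ(s'|s,a) V(s')`, with the diagonal term split off. -/
def expectedNext (V : S → ℝ) (s : S) (a : A) : ℝ :=
  (1 - Δ * totalRate lam s a) * V s + ∑ s' ∈ univ.erase s, Δ * lam s' s a * V s'

noncomputable def bellmanOp [Fintype A] [Nonempty A] (V : S → ℝ) (s : S) : ℝ :=
  univ.sup' univ_nonempty fun a => Δ * f s a + exp (-(γ * Δ)) * expectedNext lam Δ V s a

variable {f lam γ Δ}

theorem expectedNext_eq_add_generatorApply (V : S → ℝ) (s : S) (a : A) :
    expectedNext lam Δ V s a = V s + Δ * generatorApply lam V s a := by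
  simp only [expectedNext, generatorApply, mul_sub, mul_sum, mul_assoc]
  ring

theorem expectedNext_sub (V W : S → ℝ) (s : S) (a : A) :
    expectedNext lam Δ V s a - expectedNext lam Δ W s a = expectedNext lam Δ (V - W) s a := by
  simp only [expectedNext, Pi.sub_apply, mul_sub, sum_sub_distrib]
  ring

theorem abs_expectedNext_le (hlam : ∀ s' s a, s' ≠ s → 0 ≤ lam s' s a) (hΔ : 0 ≤ Δ)
    (V : S → ℝ) {s : S} {a : A} (hadm : Δ * totalRate lam s a ≤ 1) :
    |expectedNext lam Δ V s a| ≤ ‖V‖ := by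
  have hV (s' : S) : |V s'| ≤ ‖V‖ := by simpa using norm_le_pi_norm V s'
  have hw (s' : S) (hs' : s' ∈ univ.erase s) : 0 ≤ Δ * lam s' s a :=
    mul_nonneg hΔ (hlam s' s a (ne_of_mem_erase hs'))
  calc |expectedNext lam Δ V s a|
      ≤ (1 - Δ * totalRate lam s a) * |V s| + ∑ s' ∈ univ.erase s, Δ * lam s' s a * |V s'| := by
        refine (abs_add_le _ _).trans (add_le_add ?_ ((abs_sum_le_sum_abs _ _).trans ?_))
        · rw [abs_mul, abs_of_nonneg (sub_nonneg.2 hadm)]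
        · exact sum_le_sum fun s' hs' => by rw [abs_mul, abs_of_nonneg (hw s' hs')]
    _ ≤ (1 - Δ * totalRate lam s a) * ‖V‖ + ∑ s' ∈ univ.erase s, Δ * lam s' s a * ‖V‖ := by
        gcongr with s' hs'
        · exact hV s
        · exact hw s' hs'
        · exact hV s'
    _ = ‖V‖ := by rw [← sum_mul, ← mul_sum, totalRate]; ring

theorem dist_bellmanOp_le [Fintype A] [Nonempty A] (hlam : ∀ s' s a, s' ≠ s → 0 ≤ lam s' s a) (hΔ : 0 ≤ Δ)
    (hadm : ∀ s a, Δ * totalRate lam s a ≤ 1) (V W : S → ℝ) :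
    dist (bellmanOp f lam γ Δ V) (bellmanOp f lam γ Δ W) ≤ exp (-(γ * Δ)) * dist V W := by
  refine (dist_pi_le_iff (by positivity)).2 fun s => ?_
  refine abs_sup'_sub_sup'_le _ fun a _ => ?_
  rw [add_sub_add_left_eq_sub, ← mul_sub, expectedNext_sub, abs_mul, abs_of_pos (exp_pos _),
    dist_eq_norm]
  gcongr
  exact abs_expectedNext_le hlam hΔ (V - W) (hadm s a)


theorem contractingWith_bellmanOp [Fintype A] [Nonempty A]
    (hlam : ∀ s' s a, s' ≠ s → 0 ≤ lam s' s a) (hγ : 0 < γ) (hΔ : 0 < Δ)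
    (hadm : ∀ s a, Δ * totalRate lam s a ≤ 1) :
    ContractingWith (⟨exp (-(γ * Δ)), (exp_pos _).le⟩ : NNReal) (bellmanOp f lam γ Δ) :=
  ⟨exp_lt_one_iff.2 (neg_neg_of_pos (mul_pos hγ hΔ)),
    LipschitzWith.of_dist_le_mul (dist_bellmanOp_le hlam hΔ.le hadm)⟩

theorem eq_sup'_of_optimality [Fintype A] [Nonempty A] {V₀ : S → ℝ} {s : S}
    (hV₀ : γ * V₀ s = univ.sup' univ_nonempty fun a => f s a + generatorApply lam V₀ s a)
    (hΔ : 0 ≤ Δ) :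
    V₀ s = univ.sup' univ_nonempty
      fun a => (1 - γ * Δ) * V₀ s + Δ * (f s a + generatorApply lam V₀ s a) := by
  rw [← add_sup', ← mul₀_sup' hΔ, ← hV₀]
  ring

theorem dist_bellmanOp_self_le [Nonempty S] [Fintype A] [Nonempty A] {V₀ : S → ℝ} {H : ℝ}
    (hV₀ : ∀ s, γ * V₀ s = univ.sup' univ_nonempty fun a => f s a + generatorApply lam V₀ s a)
    (hH : ∀ s a, |generatorApply lam V₀ s a| ≤ H) (hγ : 0 ≤ γ) (hΔ : 0 ≤ Δ) :
    dist (bellmanOp f lam γ Δ V₀) V₀ ≤ (1 - exp (-(γ * Δ))) * (Δ * (H + γ * ‖V₀‖)) := by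
  set x := γ * Δ
  have hx : 0 ≤ x := mul_nonneg hγ hΔ
  have hE₁ : 0 ≤ 1 - exp (-x) := sub_nonneg.2 (exp_le_one_iff.2 (neg_nonpos.2 hx))
  have hE₂ : 0 ≤ exp (-x) - 1 + x := by linarith [one_sub_le_exp_neg x]
  have hE₃ : exp (-x) - 1 + x ≤ x * (1 - exp (-x)) := by
    linear_combination exp_neg_mul_one_add_le_one x
  refine dist_pi_le_iff'.2 fun s => ?_
  rw [Real.dist_eq]
  conv_lhs => rw [eq_sup'_of_optimality (hV₀ s) hΔ]
  refine abs_sup'_sub_sup'_le _ fun a _ => ?_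
  have hV : |V₀ s| ≤ ‖V₀‖ := by simpa using norm_le_pi_norm V₀ s
  calc |Δ * f s a + exp (-x) * expectedNext lam Δ V₀ s a
          - ((1 - x) * V₀ s + Δ * (f s a + generatorApply lam V₀ s a))|
      = |(exp (-x) - 1 + x) * V₀ s - (1 - exp (-x)) * (Δ * generatorApply lam V₀ s a)| := by
        rw [expectedNext_eq_add_generatorApply]; ring_nf
    _ ≤ (exp (-x) - 1 + x) * |V₀ s| + (1 - exp (-x)) * (Δ * |generatorApply lam V₀ s a|) := by
        refine (abs_sub _ _).trans (le_of_eq ?_)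
        rw [abs_mul, abs_mul, abs_mul, abs_of_nonneg hE₂, abs_of_nonneg hE₁, abs_of_nonneg hΔ]
    _ ≤ x * (1 - exp (-x)) * ‖V₀‖ + (1 - exp (-x)) * (Δ * H) := by
        gcongr
        exact hH s a
    _ = (1 - exp (-x)) * (Δ * (H + γ * ‖V₀‖)) := by ring

theorem dist_le_of_isFixedPt_bellmanOp [Nonempty S] [Fintype A] [Nonempty A]
    {V V₀ : S → ℝ} {H : ℝ} (hlam : ∀ s' s a, s' ≠ s → 0 ≤ lam s' s a) (hγ : 0 < γ) (hΔ : 0 < Δ)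
    (hadm : ∀ s a, Δ * totalRate lam s a ≤ 1) (hV : Function.IsFixedPt (bellmanOp f lam γ Δ) V)
    (hV₀ : ∀ s, γ * V₀ s = univ.sup' univ_nonempty fun a => f s a + generatorApply lam V₀ s a)
    (hH : ∀ s a, |generatorApply lam V₀ s a| ≤ H) :
    dist V V₀ ≤ Δ * (H + γ * ‖V₀‖) := by
  have hE : 0 < 1 - exp (-(γ * Δ)) := sub_pos.2 (exp_lt_one_iff.2 (neg_neg_of_pos (mul_pos hγ hΔ)))
  rw [dist_comm]
  refine ((contractingWith_bellmanOp hlam hγ hΔ hadm).dist_le_of_fixedPoint V₀ hV).trans ?_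
  refine (div_le_iff₀' hE).2 ?_
  rw [dist_comm]
  exact dist_bellmanOp_self_le hV₀ hH hγ.le hΔ.le

theorem eventually_admissible_step [Fintype A] :
    ∀ᶠ Δ in 𝓝 (0 : ℝ), ∀ s a, Δ * totalRate lam s a ≤ 1 :=
  eventually_all.2 fun _ => eventually_all.2 fun _ =>
    (continuous_mul_const _).tendsto' 0 0 (zero_mul _) |>.eventually (eventually_le_nhds one_pos)

end Discretization

/-- Convergence of the optimal value function of the time-discretized MDP to
that of the continuous-time MDP: if `V₀` solves the continuous-time optimality
equation and, for each admissible `Δ > 0` (i.e. `Δ·Λ(s,a) ≤ 1` for all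
`(s,a)`), `V_Δ` solves the discrete-time Bellman equation with increment `Δ`,
then `‖V_Δ − V₀‖ = max_{s} |V_Δ(s) − V₀(s)| → 0` as `Δ → 0⁺`. -/
theorem discretized_value_function_converges
    {S A : Type*} [Fintype S] [Nonempty S] [DecidableEq S]
    [Fintype A] [Nonempty A]
    (f : S → A → ℝ) (lam : S → S → A → ℝ)
    (hlam : ∀ s' s a, s' ≠ s → 0 ≤ lam s' s a)
    (γ : ℝ) (hγ : 0 < γ)
    (V₀ : S → ℝ)
    (hV₀ : ∀ s : S, γ * V₀ s =
      Finset.univ.sup' Finset.univ_nonempty (fun a : A =>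
        f s a + (∑ s' ∈ Finset.univ.erase s, lam s' s a * V₀ s')
          - (∑ s' ∈ Finset.univ.erase s, lam s' s a) * V₀ s))
    (VΔ : ℝ → S → ℝ)
    (hVΔ : ∀ Δ : ℝ, 0 < Δ →
      (∀ s a, Δ * (∑ s' ∈ Finset.univ.erase s, lam s' s a) ≤ 1) →
      ∀ s : S, VΔ Δ s =
        Finset.univ.sup' Finset.univ_nonempty (fun a : A =>
          Δ * f s a + Real.exp (-(γ * Δ)) *
            ((1 - Δ * ∑ s' ∈ Finset.univ.erase s, lam s' s a) * VΔ Δ s +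
              ∑ s' ∈ Finset.univ.erase s, Δ * lam s' s a * VΔ Δ s'))) :
    Filter.Tendsto
      (fun Δ : ℝ =>
        Finset.univ.sup' Finset.univ_nonempty (fun s : S => |VΔ Δ s - V₀ s|))
      (nhdsWithin 0 (Set.Ioi 0)) (nhds 0) := by
  have hV₀' (s : S) :
      γ * V₀ s = univ.sup' univ_nonempty fun a => f s a + generatorApply lam V₀ s a := by
    simpa only [generatorApply, totalRate, add_sub_assoc] using hV₀ s
  obtain ⟨H, hH⟩ := Finite.exists_le fun p : S × A => |generatorApply lam V₀ p.1 p.2|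
  have hbound : ∀ᶠ Δ in 𝓝[>] 0,
      univ.sup' univ_nonempty (fun s => |VΔ Δ s - V₀ s|) ≤ Δ * (H + γ * ‖V₀‖) := by
    filter_upwards [self_mem_nhdsWithin, nhdsWithin_le_nhds (eventually_admissible_step (lam := lam))]
      with Δ hΔ hadm
    have hfix : Function.IsFixedPt (bellmanOp f lam γ Δ) (VΔ Δ) := (funext (hVΔ Δ hΔ hadm)).symm
    refine sup'_le _ _ fun s _ => ?_
    rw [← Real.dist_eq]
    exact (dist_le_pi_dist _ _ s).trans
      (dist_le_of_isFixedPt_bellmanOp hlam hγ hΔ hadm hfix hV₀' fun s a => hH (s, a))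
  have hlim : Tendsto (fun Δ : ℝ => Δ * (H + γ * ‖V₀‖)) (𝓝[>] 0) (𝓝 0) := by
    exact ((continuous_mul_const _).tendsto' 0 0 (zero_mul _)).mono_left nhdsWithin_le_nhds
  exact squeeze_zero' (Eventually.of_forall fun Δ =>
    (abs_nonneg _).trans (le_sup' (fun s => |VΔ Δ s - V₀ s|) (mem_univ (Classical.arbitrary S)))) hbound hlim
end

section
/- Let S and A be finite nonempty sets, f : S × A → ℝ, λ(s'|s,a) ≥ 0 for s' ≠ s with total rate Λ(s,a) := ∑_{s'≠s} λ(s'|s,a), and γ > 0. Let V₀ be the unique solution of the continuous-time optimality equation and, for each Δ > 0 with Δ·Λ(s,a) ≤ 1 for all (s,a), let V_Δ be the unique solution of the discrete-time Bellman equation with increment Δ. Assume that for every s the maximizer over a ∈ A of the continuous-time right-hand side at V₀ is unique, and that for every such Δ and s the maximizer of the discrete-time right-hand side at V_Δ is unique. Then there exist Δ₀ > 0 and a constant C_V > 0, independent of Δ, such that for all Δ ∈ (0, Δ₀): ‖V_Δ − V₀‖ ≤ C_V·Δ, where ‖V‖ := max_{s∈S} |V(s)|. -/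
/-- Right-hand side of the continuous-time dynamic programming optimality
equation at a value function `V`:
`f(s,a) + ∑_{s'≠s} λ(s'|s,a)·V(s') − Λ(s,a)·V(s)`. -/
noncomputable def contRHS {S A : Type*} [Fintype S] [DecidableEq S]
    (f : S → A → ℝ) (lam : S → S → A → ℝ) (V : S → ℝ) (s : S) (a : A) : ℝ :=
  f s a + (∑ s' ∈ Finset.univ.erase s, lam s' s a * V s')
    - (∑ s' ∈ Finset.univ.erase s, lam s' s a) * V s

/-- Right-hand side of the discrete-time Bellman equation with increment `Δ`
at a value function `V`:
`Δ·f(s,a) + e^{−γΔ}·∑_{s'} p_Δ(s'|s,a)·V(s')` with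
`p_Δ(s'|s,a) = Δ·λ(s'|s,a)` for `s' ≠ s` and `p_Δ(s|s,a) = 1 − Δ·Λ(s,a)`. -/
noncomputable def discRHS {S A : Type*} [Fintype S] [DecidableEq S]
    (f : S → A → ℝ) (lam : S → S → A → ℝ) (γ Δ : ℝ) (V : S → ℝ)
    (s : S) (a : A) : ℝ :=
  Δ * f s a + Real.exp (-(γ * Δ)) *
    ((1 - Δ * ∑ s' ∈ Finset.univ.erase s, lam s' s a) * V s +
      ∑ s' ∈ Finset.univ.erase s, Δ * lam s' s a * V s')

/-! The discrete Bellman operator `T_Δ` is a sup-norm contraction with modulus `e^{−γΔ}`, and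
`V_Δ` is its fixed point, so `(1 − e^{−γΔ})·‖V_Δ − V₀‖ ≤ ‖T_Δ V₀ − V₀‖`. Expanding `T_Δ V₀`
with the continuous optimality equation gives
`T_Δ V₀ − V₀ = (e^{−γΔ}(1 + γΔ) − 1)·V₀ + O(Δ(1 − e^{−γΔ})‖f‖)`, and
`0 ≤ 1 − e^{−γΔ}(1 + γΔ) ≤ γΔ(1 − e^{−γΔ})`; dividing by `1 − e^{−γΔ}` leaves
`‖V_Δ − V₀‖ ≤ Δ(‖f‖ + γ‖V₀‖)`. -/

open Finset Function Real

lemma Finset.abs_sup'_sub_sup'_le_s12 {ι α : Type*} [AddCommGroup α] [LinearOrder α]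
    [IsOrderedAddMonoid α] {t : Finset ι} (ht : t.Nonempty) {g h : ι → α} {c : α}
    (hc : ∀ i ∈ t, |g i - h i| ≤ c) : |t.sup' ht g - t.sup' ht h| ≤ c := by
  have key : ∀ g h : ι → α, (∀ i ∈ t, g i - h i ≤ c) → t.sup' ht g - t.sup' ht h ≤ c :=
    fun g h hgh => sub_le_iff_le_add.2 <| sup'_le ht g fun i hi =>
      (sub_le_iff_le_add.1 (hgh i hi)).trans (by grw [le_sup' h hi])
  exact abs_sub_le_iff.2
    ⟨key g h fun i hi => (abs_sub_le_iff.1 (hc i hi)).1,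
      key h g fun i hi => (abs_sub_le_iff.1 (hc i hi)).2⟩

lemma Real.abs_exp_neg_mul_one_add_sub_one_le (x : ℝ) :
    |exp (-x) * (1 + x) - 1| ≤ x * (1 - exp (-x)) := by
  have hle : exp (-x) * (1 + x) ≤ 1 := by
    calc exp (-x) * (1 + x) ≤ exp (-x) * exp x := by
          gcongr; linarith [add_one_le_exp x]
      _ = 1 := by rw [← exp_add, neg_add_cancel, exp_zero]
  rw [abs_of_nonpos (sub_nonpos.2 hle)]
  nlinarith [one_sub_le_exp_neg x]

section Bellman

variable {S A : Type*} [Fintype S] [DecidableEq S]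
  (f : S → A → ℝ) (lam : S → S → A → ℝ) (γ Δ : ℝ)

lemma discRHS_sub_discRHS (V W : S → ℝ) (s : S) (a : A) :
    discRHS f lam γ Δ V s a - discRHS f lam γ Δ W s a =
      exp (-(γ * Δ)) * ((1 - Δ * ∑ s' ∈ univ.erase s, lam s' s a) * (V s - W s) +
        ∑ s' ∈ univ.erase s, Δ * lam s' s a * (V s' - W s')) := by
  simp only [discRHS, mul_sub, sum_sub_distrib]
  ring

variable {f lam γ Δ} in
lemma abs_discRHS_sub_discRHS_le {s : S} {a : A} (hlam : ∀ s' ≠ s, 0 ≤ lam s' s a)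
    (hΔ : 0 ≤ Δ) (hadm : Δ * ∑ s' ∈ univ.erase s, lam s' s a ≤ 1) {V W : S → ℝ} {D : ℝ}
    (hD : ∀ s', |V s' - W s'| ≤ D) :
    |discRHS f lam γ Δ V s a - discRHS f lam γ Δ W s a| ≤ exp (-(γ * Δ)) * D := by
  have hp : ∀ s' ∈ univ.erase s, 0 ≤ Δ * lam s' s a := fun s' hs' =>
    mul_nonneg hΔ (hlam s' (ne_of_mem_erase hs'))
  rw [discRHS_sub_discRHS, abs_mul, abs_of_pos (exp_pos _)]
  gcongr
  calc |(1 - Δ * ∑ s' ∈ univ.erase s, lam s' s a) * (V s - W s) +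
        ∑ s' ∈ univ.erase s, Δ * lam s' s a * (V s' - W s')|
      ≤ (1 - Δ * ∑ s' ∈ univ.erase s, lam s' s a) * D +
        ∑ s' ∈ univ.erase s, Δ * lam s' s a * D := by
        refine (abs_add_le _ _).trans (add_le_add ?_ ?_)
        · rw [abs_mul, abs_of_nonneg (sub_nonneg.2 hadm)]
          exact mul_le_mul_of_nonneg_left (hD s) (sub_nonneg.2 hadm)
        · refine (abs_sum_le_sum_abs _ _).trans (sum_le_sum fun s' hs' => ?_)
          rw [abs_mul, abs_of_nonneg (hp s' hs')]
          exact mul_le_mul_of_nonneg_left (hD s') (hp s' hs')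
    _ = D := by rw [← sum_mul, ← mul_sum]; ring

lemma discRHS_eq (V : S → ℝ) (s : S) (a : A) :
    discRHS f lam γ Δ V s a = exp (-(γ * Δ)) * (V s + Δ * contRHS f lam V s a) +
      Δ * (1 - exp (-(γ * Δ))) * f s a := by
  simp only [discRHS, contRHS, ← mul_sum, mul_assoc]
  ring

variable [Fintype A] [Nonempty A]

noncomputable def discBellman (V : S → ℝ) (s : S) : ℝ :=
  univ.sup' univ_nonempty (discRHS f lam γ Δ V s)

variable {f lam γ Δ}

lemma lipschitzWith_discBellman (hlam : ∀ s' s a, s' ≠ s → 0 ≤ lam s' s a) (hΔ : 0 ≤ Δ)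
    (hadm : ∀ s a, Δ * ∑ s' ∈ univ.erase s, lam s' s a ≤ 1) :
    LipschitzWith ⟨exp (-(γ * Δ)), (exp_pos _).le⟩ (discBellman f lam γ Δ) :=
  LipschitzWith.of_dist_le_mul fun V W =>
    (dist_pi_le_iff (mul_nonneg (exp_pos _).le dist_nonneg)).2 fun s => by
      rw [Real.dist_eq]
      refine abs_sup'_sub_sup'_le_s12 _ fun a _ =>
        abs_discRHS_sub_discRHS_le (fun s' => hlam s' s a) hΔ (hadm s a) fun s' => ?_
      rw [← Real.dist_eq]
      exact dist_le_pi_dist V W s'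

lemma contractingWith_discBellman (hlam : ∀ s' s a, s' ≠ s → 0 ≤ lam s' s a) (hγ : 0 < γ)
    (hΔ : 0 < Δ) (hadm : ∀ s a, Δ * ∑ s' ∈ univ.erase s, lam s' s a ≤ 1) :
    ContractingWith ⟨exp (-(γ * Δ)), (exp_pos _).le⟩ (discBellman f lam γ Δ) :=
  ⟨NNReal.coe_lt_coe.1 <| exp_lt_one_iff.2 <| neg_lt_zero.2 (mul_pos hγ hΔ),
    lipschitzWith_discBellman hlam hΔ.le hadm⟩

lemma dist_discBellman_self_le (hγ : 0 ≤ γ) (hΔ : 0 ≤ Δ) {V : S → ℝ}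
    (hV : ∀ s, γ * V s = univ.sup' univ_nonempty (contRHS f lam V s)) :
    dist (discBellman f lam γ Δ V) V ≤ (1 - exp (-(γ * Δ))) * (Δ * (‖f‖ + γ * ‖V‖)) := by
  set e := exp (-(γ * Δ))
  have hγΔ : 0 ≤ γ * Δ := mul_nonneg hγ hΔ
  have he : 0 ≤ 1 - e := sub_nonneg.2 (exp_le_one_iff.2 (neg_nonpos.2 hγΔ))
  refine (dist_pi_le_iff (by positivity)).2 fun s => ?_
  have hsup : univ.sup' univ_nonempty (fun a => e * (V s + Δ * contRHS f lam V s a)) =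
      e * (1 + γ * Δ) * V s := by
    have hmono : Monotone fun v => e * (V s + Δ * v) := fun v w hvw =>
      mul_le_mul_of_nonneg_left (by gcongr) (exp_pos _).le
    rw [← comp_def (fun v => e * (V s + Δ * v)), ← apply_sup'_eq_sup'_comp _ _
      fun _ _ => hmono.map_max, ← hV s]
    ring
  have hreward : |discBellman f lam γ Δ V s - e * (1 + γ * Δ) * V s| ≤ Δ * (1 - e) * ‖f‖ := by
    rw [← hsup]
    refine abs_sup'_sub_sup'_le_s12 _ fun a _ => ?_
    rw [discRHS_eq, add_sub_cancel_left, abs_mul, abs_of_nonneg (by positivity)]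
    gcongr
    exact (norm_le_pi_norm (f s) a).trans (norm_le_pi_norm f s)
  have hdecay : |e * (1 + γ * Δ) * V s - V s| ≤ γ * Δ * (1 - e) * ‖V‖ := by
    rw [← sub_one_mul, abs_mul]
    exact mul_le_mul (abs_exp_neg_mul_one_add_sub_one_le _) (norm_le_pi_norm V s)
      (abs_nonneg _) (by positivity)
  calc dist (discBellman f lam γ Δ V s) (V s)
      ≤ |discBellman f lam γ Δ V s - e * (1 + γ * Δ) * V s| +
        |e * (1 + γ * Δ) * V s - V s| := by rw [Real.dist_eq]; exact abs_sub_le _ _ _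
    _ ≤ (1 - e) * (Δ * (‖f‖ + γ * ‖V‖)) := by linarith

end Bellman

theorem discretized_value_function_error_O_Delta_general
    {S A : Type*} [Fintype S] [Nonempty S] [DecidableEq S]
    [Fintype A] [Nonempty A]
    (f : S → A → ℝ) (lam : S → S → A → ℝ)
    (hlam : ∀ s' s a, s' ≠ s → 0 ≤ lam s' s a)
    (γ : ℝ) (hγ : 0 < γ)
    (V₀ : S → ℝ)
    (hV₀ : ∀ s : S, γ * V₀ s =
      Finset.univ.sup' Finset.univ_nonempty (contRHS f lam V₀ s))
    (VΔ : ℝ → S → ℝ)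
    (hVΔ : ∀ Δ : ℝ, 0 < Δ →
      (∀ s a, Δ * (∑ s' ∈ Finset.univ.erase s, lam s' s a) ≤ 1) →
      ∀ s : S, VΔ Δ s =
        Finset.univ.sup' Finset.univ_nonempty (discRHS f lam γ Δ (VΔ Δ) s)) :
    ∃ Δ₀ > (0 : ℝ), ∃ C_V > (0 : ℝ), ∀ Δ : ℝ, 0 < Δ → Δ < Δ₀ →
      (∀ s a, Δ * (∑ s' ∈ Finset.univ.erase s, lam s' s a) ≤ 1) →
      Finset.univ.sup' Finset.univ_nonempty (fun s : S => |VΔ Δ s - V₀ s|) ≤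
        C_V * Δ := by
  refine ⟨1, one_pos, ‖f‖ + γ * ‖V₀‖ + 1, by positivity, fun Δ hΔ _ hadm => ?_⟩
  have hT := contractingWith_discBellman (f := f) hlam hγ hΔ hadm
  have hfix : IsFixedPt (discBellman f lam γ Δ) (VΔ Δ) := (funext (hVΔ Δ hΔ hadm)).symm
  have hdist : dist (VΔ Δ) V₀ ≤ Δ * (‖f‖ + γ * ‖V₀‖) := by
    rw [dist_comm]
    calc dist V₀ (VΔ Δ) ≤ dist V₀ (discBellman f lam γ Δ V₀) / (1 - exp (-(γ * Δ))) :=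
          hT.dist_le_of_fixedPoint V₀ hfix
      _ ≤ (1 - exp (-(γ * Δ))) * (Δ * (‖f‖ + γ * ‖V₀‖)) / (1 - exp (-(γ * Δ))) := by
          rw [dist_comm]
          gcongr
          · exact hT.one_sub_K_pos.le
          · exact dist_discBellman_self_le hγ.le hΔ.le hV₀
      _ = Δ * (‖f‖ + γ * ‖V₀‖) := mul_div_cancel_left₀ _ hT.one_sub_K_pos.ne'
  refine sup'_le _ _ fun s _ => ?_
  calc |VΔ Δ s - V₀ s| = dist (VΔ Δ s) (V₀ s) := (Real.dist_eq _ _).symm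
    _ ≤ Δ * (‖f‖ + γ * ‖V₀‖) := (dist_le_pi_dist _ _ s).trans hdist
    _ ≤ (‖f‖ + γ * ‖V₀‖ + 1) * Δ := by nlinarith

/-- `O(Δ)` bound for the discretization error of the optimal value functions:
under uniqueness of the maximizers of the continuous-time right-hand side at
`V₀` and of the discrete-time right-hand side at `V_Δ`, there exist `Δ₀ > 0`
and a constant `C_V > 0`, independent of `Δ`, such that
`‖V_Δ − V₀‖ ≤ C_V·Δ` for all admissible `Δ ∈ (0, Δ₀)`. -/
theorem discretized_value_function_error_O_Delta
    {S A : Type*} [Fintype S] [Nonempty S] [DecidableEq S]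
    [Fintype A] [Nonempty A]
    (f : S → A → ℝ) (lam : S → S → A → ℝ)
    (hlam : ∀ s' s a, s' ≠ s → 0 ≤ lam s' s a)
    (γ : ℝ) (hγ : 0 < γ)
    (V₀ : S → ℝ)
    (hV₀ : ∀ s : S, γ * V₀ s =
      Finset.univ.sup' Finset.univ_nonempty (contRHS f lam V₀ s))
    (ha₀ : ∀ s : S, ∃ a : A, ∀ a' : A, a' ≠ a →
      contRHS f lam V₀ s a' < contRHS f lam V₀ s a)
    (VΔ : ℝ → S → ℝ)
    (hVΔ : ∀ Δ : ℝ, 0 < Δ →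
      (∀ s a, Δ * (∑ s' ∈ Finset.univ.erase s, lam s' s a) ≤ 1) →
      ∀ s : S, VΔ Δ s =
        Finset.univ.sup' Finset.univ_nonempty (discRHS f lam γ Δ (VΔ Δ) s))
    (haΔ : ∀ Δ : ℝ, 0 < Δ →
      (∀ s a, Δ * (∑ s' ∈ Finset.univ.erase s, lam s' s a) ≤ 1) →
      ∀ s : S, ∃ a : A, ∀ a' : A, a' ≠ a →
        discRHS f lam γ Δ (VΔ Δ) s a' < discRHS f lam γ Δ (VΔ Δ) s a) :
    ∃ Δ₀ > (0 : ℝ), ∃ C_V > (0 : ℝ), ∀ Δ : ℝ, 0 < Δ → Δ < Δ₀ →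
      (∀ s a, Δ * (∑ s' ∈ Finset.univ.erase s, lam s' s a) ≤ 1) →
      Finset.univ.sup' Finset.univ_nonempty (fun s : S => |VΔ Δ s - V₀ s|) ≤
        C_V * Δ :=
  discretized_value_function_error_O_Delta_general f lam hlam γ hγ V₀ hV₀ VΔ hVΔ
end
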